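/- For every natural number k, the Stern polynomials satisfy 2·∑_{i=1}^{2^k} B_i(t) = (t+2)^k + t^k as an identity in ℤ[t]. -/

import Mathlib

open Polynomial

/-- The Stern polynomials: `B 0 = 0`, `B 1 = 1`, `B (2n) = t * B n`,
`B (2n+1) = B n + B (n+1)`. -/
noncomputable def stern : ℕ → Polynomial ℤ
  | 0 => 0
  | 1 => 1
  | n + 2 =>
    if _h : n % 2 = 0 then
      X * stern (n / 2 + 1)
    else
      stern (n / 2 + 1) + stern (n / 2 + 2)
  decreasing_by all_goals omega

/-! With `S n = ∑ i < n, B i`, splitting `S (2n)` by the parity of the index gives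
`S (2n) = t S n + (S n + S (n + 1))`, the even terms via `B (2i) = t B i` and the odd ones via
`B (2i+1) = B i + B (i+1)`. As `B (2^k) = t^k`, this yields `S (2^(k+1)) = (t + 2) S (2^k) + t^k`,
so `2 S (2^k) = (t + 2)^k - t^k` by induction, and the row sum is `S (2^k + 1)`. -/

open Finset

@[simp] lemma stern_zero : stern 0 = 0 := by simp [stern]

@[simp] lemma stern_one : stern 1 = 1 := by simp [stern]

lemma stern_two_mul (n : ℕ) : stern (2 * n) = X * stern n := by
  cases n with
  | zero => simp
  | succ m =>
    rw [show 2 * (m + 1) = 2 * m + 2 by ring, stern]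
    simp

lemma stern_two_mul_add_one (n : ℕ) : stern (2 * n + 1) = stern n + stern (n + 1) := by
  cases n with
  | zero => simp
  | succ m =>
    rw [show 2 * (m + 1) + 1 = (2 * m + 1) + 2 by ring, stern]
    simp [show (2 * m + 1) % 2 = 1 by omega, show (2 * m + 1) / 2 = m by omega]

lemma stern_two_pow (k : ℕ) : stern (2 ^ k) = X ^ k := by
  induction k with
  | zero => simp
  | succ k ih => rw [pow_succ', stern_two_mul, ih, pow_succ']

lemma sum_range_stern_two_mul (n : ℕ) :
    ∑ i ∈ range (2 * n), stern i =
      (X + 1) * ∑ i ∈ range n, stern i + ∑ i ∈ range (n + 1), stern i := by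
  induction n with
  | zero => simp
  | succ n ih =>
    rw [show 2 * (n + 1) = 2 * n + 1 + 1 by ring, sum_range_succ, sum_range_succ, ih,
      stern_two_mul, stern_two_mul_add_one, sum_range_succ _ (n + 1), sum_range_succ _ n]
    ring

lemma two_mul_sum_range_stern_two_pow (k : ℕ) :
    2 * ∑ i ∈ range (2 ^ k), stern i = (X + 2) ^ k - X ^ k := by
  induction k with
  | zero => simp
  | succ k ih =>
    rw [pow_succ', sum_range_stern_two_mul, sum_range_succ, stern_two_pow]
    linear_combination (X + 2) * ih

lemma sum_Icc_one_stern (n : ℕ) : ∑ i ∈ Icc 1 n, stern i = ∑ i ∈ range (n + 1), stern i := by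
  rw [← Ico_add_one_right_eq_Icc, range_eq_Ico, sum_eq_sum_Ico_succ_bot n.add_one_pos, stern_zero,
    zero_add, zero_add]

theorem stern_sum_rows (k : ℕ) :
    2 * ∑ i ∈ Finset.Icc 1 (2 ^ k), stern i = (X + 2) ^ k + X ^ k := by
  rw [sum_Icc_one_stern, sum_range_succ, stern_two_pow, mul_add, two_mul_sum_range_stern_two_pow]
  ring
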